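/- There exists a sequence ζ : ℕ → ℝ with ζ_n → 0 as n → ∞ such that the following holds for every integer n ≥ 2. Let 𝒴 be the three-element alphabet {0, 1, ?}. Let P̃ be any probability mass function on 𝒴^n of the form P̃(y₁,…,y_n) = 𝟙{y₁ = 1} · Π_{i=2}^{n} P̃^{(i)}(y_i | y_{i−1}), where each P̃^{(i)}(· | ·) is a conditional probability mass function on 𝒴 given 𝒴 satisfying P̃^{(i)}(0 | 0) = 0. Then there exists a single (time-invariant) conditional probability mass function Q(· | ·) on 𝒴 given 𝒴 with Q(0 | 0) = 0 such that, defining the probability mass function Q̃ on 𝒴^n by Q̃(y₁,…,y_n) = Π_{i=1}^{n} Q(y_i | y_{i−1}) with the convention y₀ = 1, the Shannon entropies satisfy H(P̃) ≤ H(Q̃) + ζ_n. -/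

import Mathlib

/-- Shannon entropy (in bits) of a probability mass function on a finite type,
with the convention `0·log₂ 0 = 0` (automatic since `Real.logb 2 0 = 0`). -/
noncomputable def shannonEntropy {α : Type*} [Fintype α] (p : α → ℝ) : ℝ :=
  -∑ x, p x * Real.logb 2 (p x)

/-!
Write `λ = 1 + √3` for the Perron root of the adjacency matrix `A` of the words over `Fin 3`
without the factor `00`, and `v = (√3 - 1, 1, 1)` for its Perron eigenvector. The kernel
`Q(a | b) = A a b * v a / (λ * v b)` is stochastic (it is the Parry, i.e. maximal-entropy, chain),
and along any word the ratios of `v` telescope, so `Q̃(y) ≤ λ⁻ⁿ` and hence `H(Q̃) ≥ n log₂ λ`.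
The same chain with its first letter pinned to `1` is a probability distribution giving mass at
least `λ⁻ⁿ` to every admissible word starting with `1`, which contains the support of `P̃`;
comparing `P̃` with it gives `H(P̃) ≤ n log₂ λ`. So `ζ = 0` works.
-/
open Finset Real

section Entropy

variable {α : Type*} [Fintype α] {p : α → ℝ}

lemma shannonEntropy_eq_sum_negMulLog_div (p : α → ℝ) :
    shannonEntropy p = (∑ x, negMulLog (p x)) / log 2 := by
  rw [shannonEntropy, sum_div, ← sum_neg_distrib]
  exact sum_congr rfl fun x _ => by simp only [negMulLog, logb]; ring

theorem shannonEntropy_le_neg_logb {q : α → ℝ} {c : ℝ} (hp0 : ∀ x, 0 ≤ p x)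
    (hp1 : ∑ x, p x = 1) (hq0 : ∀ x, 0 ≤ q x) (hq1 : ∑ x, q x ≤ 1) (hc : 0 < c)
    (hcq : ∀ x, p x ≠ 0 → c ≤ q x) : shannonEntropy p ≤ -logb 2 c := by
  have key : ∀ x, negMulLog (p x) ≤ p x * -log c + (q x - p x) := by
    intro x
    rcases (hp0 x).eq_or_lt with hx | hx
    · simp [← hx, hq0 x]
    · have h := log_le_sub_one_of_pos (div_pos hc hx)
      rw [log_div hc.ne' hx.ne'] at h
      have := mul_le_mul_of_nonneg_left h hx.le
      have hcancel : p x * (c / p x) = c := mul_div_cancel₀ c hx.ne'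
      simp only [negMulLog]
      nlinarith [hcq x hx.ne']
  have hsum : ∑ x, negMulLog (p x) ≤ -log c := by
    calc ∑ x, negMulLog (p x) ≤ ∑ x, (p x * -log c + (q x - p x)) := sum_le_sum fun x _ => key x
      _ = -log c + (∑ x, q x - 1) := by
        rw [sum_add_distrib, sum_sub_distrib, ← sum_mul, hp1, one_mul]
      _ ≤ -log c := by linarith
  rw [shannonEntropy_eq_sum_negMulLog_div, logb, ← neg_div]
  exact div_le_div_of_nonneg_right hsum (log_pos one_lt_two).le

theorem neg_logb_le_shannonEntropy {c : ℝ} (hp0 : ∀ x, 0 ≤ p x) (hp1 : ∑ x, p x = 1)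
    (hpc : ∀ x, p x ≤ c) : -logb 2 c ≤ shannonEntropy p := by
  have key : ∀ x, p x * -log c ≤ negMulLog (p x) := by
    intro x
    rcases (hp0 x).eq_or_lt with hx | hx
    · simp [← hx]
    · have := mul_le_mul_of_nonneg_left (log_le_log hx (hpc x)) hx.le
      simp only [negMulLog]
      linarith
  have hsum : -log c ≤ ∑ x, negMulLog (p x) := by
    calc -log c = ∑ x, p x * -log c := by rw [← sum_mul, hp1, one_mul]
      _ ≤ ∑ x, negMulLog (p x) := sum_le_sum fun x _ => key x
  rw [shannonEntropy_eq_sum_negMulLog_div, logb, ← neg_div]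
  exact div_le_div_of_nonneg_right hsum (log_pos one_lt_two).le

end Entropy

section MarkovPath

variable {α : Type*} {n : ℕ}

/-- `K a b` is the probability of moving to `a` from `b`. -/
def IsStochastic [Fintype α] (K : α → α → ℝ) : Prop :=
  ∀ b, (∀ a, 0 ≤ K a b) ∧ ∑ a, K a b = 1

lemma IsStochastic.nonneg [Fintype α] {K : α → α → ℝ} (hK : IsStochastic K) (a b : α) :
    0 ≤ K a b :=
  (hK b).1 a

/-- The state before time `i` of a path started at `s`. -/
def prev (s : α) (y : Fin n → α) (i : Fin n) : α :=
  if i.val = 0 then s else y ⟨i.val - 1, lt_of_le_of_lt (Nat.sub_le _ _) i.isLt⟩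

def pathProb (K : Fin n → α → α → ℝ) (s : α) (y : Fin n → α) : ℝ :=
  ∏ i, K i (y i) (prev s y i)

@[simp]
lemma prev_zero (s : α) (y : Fin (n + 1) → α) : prev s y 0 = s := rfl

@[simp]
lemma prev_cons_succ (s a : α) (y : Fin n → α) (i : Fin n) :
    prev s (Fin.cons a y) i.succ = prev a y i := by
  rcases i with ⟨_ | i, hi⟩ <;> rfl

lemma pathProb_cons (K : Fin (n + 1) → α → α → ℝ) (s a : α) (y : Fin n → α) :
    pathProb K s (Fin.cons a y) = K 0 a s * pathProb (fun i => K i.succ) a y := by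
  simp [pathProb, Fin.prod_univ_succ]

lemma pathProb_nonneg {K : Fin n → α → α → ℝ} (hK : ∀ i a b, 0 ≤ K i a b) (s : α)
    (y : Fin n → α) : 0 ≤ pathProb K s y :=
  prod_nonneg fun i _ => hK i _ _

lemma sum_pathProb [Fintype α] {K : Fin n → α → α → ℝ} (hK : ∀ i, IsStochastic (K i))
    (s : α) : ∑ y, pathProb K s y = 1 := by
  induction n generalizing s with
  | zero => simp [pathProb]
  | succ n ih =>
    rw [← (Fin.consEquiv fun _ => α).sum_comp, Fintype.sum_prod_type]
    simp only [Fin.consEquiv, Equiv.coe_fn_mk, pathProb_cons, ← mul_sum, ih (fun i => hK i.succ),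
      mul_one]
    exact (hK 0 s).2

lemma prod_div_prev (f : α → ℝ) (hf : ∀ a, f a ≠ 0) (s : α) (y : Fin n → α) :
    ∏ i, f (y i) / f (prev s y i) = f ((Fin.cons s y : Fin (n + 1) → α) (Fin.last n)) / f s := by
  induction n generalizing s with
  | zero => simp [div_self (hf s)]
  | succ n ih =>
    induction y using Fin.consCases with
    | _ a y =>
      rw [Fin.prod_univ_succ]
      simp only [Fin.cons_zero, prev_zero, Fin.cons_succ, prev_cons_succ, ih, ← Fin.succ_last]
      field_simp [hf a, hf s]

variable [DecidableEq α]

/-- Forces the state at time `0` to be `a₀`, whatever the initial state. -/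
def pinKernel (K : Fin n → α → α → ℝ) (a₀ : α) : Fin n → α → α → ℝ :=
  fun i a b => if i.val = 0 then (if a = a₀ then 1 else 0) else K i a b

lemma isStochastic_pinKernel [Fintype α] {K : Fin n → α → α → ℝ}
    (hK : ∀ i, IsStochastic (K i)) (a₀ : α) (i : Fin n) :
    IsStochastic (pinKernel K a₀ i) := by
  intro b
  by_cases hi : i.val = 0
  · simp only [pinKernel, hi, if_true]
    exact ⟨fun a => by split_ifs <;> norm_num, by simp⟩
  · simpa only [pinKernel, hi, if_false] using hK i b

lemma pathProb_pinKernel (K : Fin (n + 1) → α → α → ℝ) (a₀ s : α) (y : Fin (n + 1) → α) :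
    pathProb (pinKernel K a₀) s y = (if y 0 = a₀ then 1 else 0) *
      ∏ i : Fin (n + 1), if i.val = 0 then 1
        else K i (y i) (y ⟨i.val - 1, lt_of_le_of_lt (Nat.sub_le _ _) i.isLt⟩) := by
  simp [pathProb, pinKernel, prev, Fin.prod_univ_succ]

lemma pathProb_pinKernel_mul {K : Fin (n + 1) → α → α → ℝ} {a₀ : α} (s : α)
    {y : Fin (n + 1) → α} (hy : y 0 = a₀) :
    pathProb (pinKernel K a₀) s y * K 0 a₀ s = pathProb K s y := by
  simp [pathProb, pinKernel, Fin.prod_univ_succ, hy, mul_comm]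

end MarkovPath

section Parry

variable {α : Type*} {n : ℕ}

noncomputable def parryKernel (A : α → α → ℝ) (r : ℝ) (v : α → ℝ) : α → α → ℝ :=
  fun a b => A a b * v a / (r * v b)

lemma isStochastic_parryKernel [Fintype α] {A : α → α → ℝ} {r : ℝ} {v : α → ℝ}
    (hA : ∀ a b, 0 ≤ A a b) (hr : 0 < r) (hv : ∀ a, 0 < v a)
    (heig : ∀ b, ∑ a, A a b * v a = r * v b) : IsStochastic (parryKernel A r v) := fun b =>
  ⟨fun a => div_nonneg (mul_nonneg (hA a b) (hv a).le) (mul_pos hr (hv b)).le, by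
    simp only [parryKernel, ← sum_div, heig, div_self (mul_pos hr (hv b)).ne']⟩

lemma pathProb_parryKernel (A : α → α → ℝ) (r : ℝ) {v : α → ℝ} (hv : ∀ a, v a ≠ 0) (s : α)
    (y : Fin n → α) :
    pathProb (fun _ => parryKernel A r v) s y = (∏ i, A (y i) (prev s y i)) * r⁻¹ ^ n *
      (v ((Fin.cons s y : Fin (n + 1) → α) (Fin.last n)) / v s) := by
  have h : ∀ a b, parryKernel A r v a b = A a b * r⁻¹ * (v a / v b) := fun a b => by
    simp only [parryKernel]; ring
  simp only [pathProb, h, prod_mul_distrib, prod_const, card_univ, Fintype.card_fin,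
    prod_div_prev v hv]

end Parry

section NoZeroZero

variable {n : ℕ}

def noZeroZero : Fin 3 → Fin 3 → ℝ := fun a b => if a = 0 ∧ b = 0 then 0 else 1

noncomputable def perronRoot : ℝ := 1 + √3

noncomputable def perronVec : Fin 3 → ℝ := ![√3 - 1, 1, 1]

noncomputable def maxEntropyKernel : Fin 3 → Fin 3 → ℝ :=
  parryKernel noZeroZero perronRoot perronVec

lemma one_lt_sqrt_three : 1 < √3 := by
  rw [Real.lt_sqrt zero_le_one]; norm_num

lemma sqrt_three_lt_two : √3 < 2 := by
  rw [Real.sqrt_lt' two_pos]; norm_num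

lemma perronRoot_pos : 0 < perronRoot := by
  unfold perronRoot; positivity

lemma perronRoot_mul_perronVec_zero : perronRoot * perronVec 0 = 2 := by
  simp only [perronRoot, perronVec, Matrix.cons_val_zero]
  nlinarith [Real.sq_sqrt (show (0 : ℝ) ≤ 3 by norm_num)]

lemma perronVec_pos (a : Fin 3) : 0 < perronVec a := by
  fin_cases a <;> simp [perronVec, one_lt_sqrt_three]

lemma perronVec_le_one (a : Fin 3) : perronVec a ≤ 1 := by
  fin_cases a <;> simp [perronVec]
  linarith [sqrt_three_lt_two]

lemma one_le_perronRoot_mul_perronVec (a : Fin 3) : 1 ≤ perronRoot * perronVec a := by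
  fin_cases a
  · simp [perronRoot_mul_perronVec_zero]
  all_goals simp [perronVec, perronRoot]

lemma sum_noZeroZero_mul_perronVec (b : Fin 3) :
    ∑ a, noZeroZero a b * perronVec a = perronRoot * perronVec b := by
  fin_cases b <;> simp [Fin.sum_univ_three, noZeroZero, perronVec, perronRoot] <;>
    nlinarith [Real.sq_sqrt (show (0 : ℝ) ≤ 3 by norm_num)]

lemma isStochastic_maxEntropyKernel : IsStochastic maxEntropyKernel :=
  isStochastic_parryKernel (fun a b => by unfold noZeroZero; split_ifs <;> norm_num)
    perronRoot_pos perronVec_pos sum_noZeroZero_mul_perronVec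

lemma maxEntropyKernel_zero_zero : maxEntropyKernel 0 0 = 0 := by
  simp [maxEntropyKernel, parryKernel, noZeroZero]

lemma maxEntropyKernel_one_one : maxEntropyKernel 1 1 = perronRoot⁻¹ := by
  simp [maxEntropyKernel, parryKernel, noZeroZero, perronVec]

lemma pathProb_maxEntropyKernel (s : Fin 3) (y : Fin n → Fin 3) :
    pathProb (fun _ => maxEntropyKernel) s y = (∏ i, noZeroZero (y i) (prev s y i)) *
      perronRoot⁻¹ ^ n *
        (perronVec ((Fin.cons s y : Fin (n + 1) → Fin 3) (Fin.last n)) / perronVec s) :=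
  pathProb_parryKernel _ _ (fun a => (perronVec_pos a).ne') s y

lemma pathProb_maxEntropyKernel_le (y : Fin n → Fin 3) :
    pathProb (fun _ => maxEntropyKernel) 1 y ≤ perronRoot⁻¹ ^ n := by
  have hA : ∏ i, noZeroZero (y i) (prev 1 y i) ≤ 1 :=
    prod_le_one (fun i _ => by unfold noZeroZero; split_ifs <;> norm_num)
      (fun i _ => by unfold noZeroZero; split_ifs <;> norm_num)
  have hr := perronRoot_pos
  rw [pathProb_maxEntropyKernel, show perronVec 1 = 1 from rfl, div_one]
  calc _ ≤ 1 * perronRoot⁻¹ ^ n * 1 :=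
        mul_le_mul (mul_le_mul_of_nonneg_right hA (by positivity)) (perronVec_le_one _)
          (perronVec_pos _).le (by positivity)
    _ = perronRoot⁻¹ ^ n := by ring

lemma noZeroZero_eq_one_of_pinKernel_ne_zero {P : Fin n → Fin 3 → Fin 3 → ℝ}
    (hP00 : ∀ i, P i 0 0 = 0) {i : Fin n} {a b : Fin 3} (h : pinKernel P 1 i a b ≠ 0) :
    noZeroZero a b = 1 := by
  unfold pinKernel at h
  unfold noZeroZero
  split_ifs at h with hi ha
  · simp [ha]
  · exact absurd rfl h
  · rw [if_neg]
    rintro ⟨rfl, rfl⟩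
    exact h (hP00 i)

lemma pow_le_pathProb_pinKernel_maxEntropyKernel {P : Fin (n + 1) → Fin 3 → Fin 3 → ℝ}
    (hP00 : ∀ i, P i 0 0 = 0) {y : Fin (n + 1) → Fin 3} (hy : pathProb (pinKernel P 1) 1 y ≠ 0) :
    perronRoot⁻¹ ^ (n + 1) ≤ pathProb (pinKernel (fun _ => maxEntropyKernel) 1) 1 y := by
  have hfactor : ∀ i, pinKernel P 1 i (y i) (prev 1 y i) ≠ 0 := fun i =>
    prod_ne_zero_iff.mp hy i (mem_univ i)
  have hy0 : y 0 = 1 := by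
    by_contra h
    exact hfactor 0 (by simp [pinKernel, h])
  have hadm : ∏ i, noZeroZero (y i) (prev 1 y i) = 1 :=
    prod_eq_one fun i _ => noZeroZero_eq_one_of_pinKernel_ne_zero hP00 (hfactor i)
  have h := pathProb_pinKernel_mul (K := fun _ => maxEntropyKernel) 1 hy0
  rw [maxEntropyKernel_one_one, pathProb_maxEntropyKernel, hadm, show perronVec 1 = 1 from rfl,
    div_one, one_mul] at h
  set q := pathProb (pinKernel (fun _ => maxEntropyKernel) 1) 1 y
  set v := perronVec ((Fin.cons 1 y : Fin (n + 2) → Fin 3) (Fin.last (n + 1)))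
  have hr := perronRoot_pos
  have hq : q = perronRoot⁻¹ ^ (n + 1) * (perronRoot * v) := by
    rw [mul_comm perronRoot v, ← mul_assoc, ← h]; field_simp
  rw [hq]
  exact le_mul_of_one_le_right (by positivity) (one_le_perronRoot_mul_perronVec _)

theorem shannonEntropy_pathProb_pinKernel_le {P : Fin (n + 1) → Fin 3 → Fin 3 → ℝ}
    (hP : ∀ i, IsStochastic (P i)) (hP00 : ∀ i, P i 0 0 = 0) :
    shannonEntropy (pathProb (pinKernel P 1) 1) ≤
      shannonEntropy (pathProb (fun _ : Fin (n + 1) => maxEntropyKernel) 1) := by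
  have hPin := isStochastic_pinKernel hP 1
  have hQ := isStochastic_maxEntropyKernel
  have hQin := isStochastic_pinKernel (fun (_ : Fin (n + 1)) => hQ) 1
  calc shannonEntropy (pathProb (pinKernel P 1) 1)
      ≤ -logb 2 (perronRoot⁻¹ ^ (n + 1)) :=
        shannonEntropy_le_neg_logb (pathProb_nonneg (fun i => (hPin i).nonneg) 1)
          (sum_pathProb hPin 1) (pathProb_nonneg (fun i => (hQin i).nonneg) 1)
          (sum_pathProb hQin 1).le (pow_pos (inv_pos.2 perronRoot_pos) _)
          fun _ hy => pow_le_pathProb_pinKernel_maxEntropyKernel hP00 hy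
    _ ≤ shannonEntropy (pathProb (fun _ => maxEntropyKernel) 1) :=
        neg_logb_le_shannonEntropy (pathProb_nonneg (fun _ => hQ.nonneg) 1)
          (sum_pathProb (fun _ => hQ) 1) pathProb_maxEntropyKernel_le

end NoZeroZero

/-- The alphabet is `Fin 3 = {0, 1, ?}` (with `2` playing the role of `?`).
There exists a sequence `ζ : ℕ → ℝ` with `ζ_n → 0` such that for every `n ≥ 2` and every
family of conditional pmfs `P^{(i)}(·|·)` on `Fin 3` with `P^{(i)}(0|0) = 0`, defining
`P̃(y₁,…,y_n) = 𝟙{y₁ = 1}·Π_{i=2}^{n} P^{(i)}(y_i | y_{i−1})`, there is a single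
time-invariant conditional pmf `Q(·|·)` with `Q(0|0) = 0` such that, with
`Q̃(y₁,…,y_n) = Π_{i=1}^{n} Q(y_i | y_{i−1})` (convention `y₀ = 1`), the Shannon
entropies satisfy `H(P̃) ≤ H(Q̃) + ζ_n`. -/
theorem entropy_upper_bound_by_time_invariant_markov :
    ∃ ζ : ℕ → ℝ, Filter.Tendsto ζ Filter.atTop (nhds 0) ∧
      ∀ n : ℕ, ∀ hn : 2 ≤ n,
      ∀ P : Fin n → Fin 3 → Fin 3 → ℝ,
        (∀ i : Fin n, ∀ y' : Fin 3, (∀ y : Fin 3, 0 ≤ P i y y') ∧ (∑ y : Fin 3, P i y y') = 1) →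
        (∀ i : Fin n, P i 0 0 = 0) →
        ∃ Q : Fin 3 → Fin 3 → ℝ,
          (∀ y' : Fin 3, (∀ y : Fin 3, 0 ≤ Q y y') ∧ (∑ y : Fin 3, Q y y') = 1) ∧
          Q 0 0 = 0 ∧
          shannonEntropy (fun y : Fin n → Fin 3 =>
              (if y ⟨0, by omega⟩ = 1 then (1 : ℝ) else 0) *
                ∏ i : Fin n, if i.val = 0 then 1
                  else P i (y i) (y ⟨i.val - 1, lt_of_le_of_lt (Nat.sub_le _ _) i.isLt⟩))
            ≤ shannonEntropy (fun y : Fin n → Fin 3 =>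
                ∏ i : Fin n, Q (y i)
                  (if i.val = 0 then 1
                   else y ⟨i.val - 1, lt_of_le_of_lt (Nat.sub_le _ _) i.isLt⟩)) + ζ n := by
  refine ⟨fun _ => 0, tendsto_const_nhds, fun n hn P hP hP00 =>
    ⟨maxEntropyKernel, isStochastic_maxEntropyKernel, maxEntropyKernel_zero_zero, ?_⟩⟩
  obtain ⟨m, rfl⟩ : ∃ m, n = m + 1 := ⟨n - 1, by omega⟩
  rw [add_zero]
  convert shannonEntropy_pathProb_pinKernel_le hP hP00 using 2
  · exact funext fun y => (pathProb_pinKernel P 1 1 y).symm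
  · rfl
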